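/- arXiv:2207.09104 — 6 statements merged into one kernel-verified Lean document; each statement's English description precedes it below -/
import Mathlib

section
/- For every continuous function u : [α₀, ξ] → ℝ and every η ∈ [α₀, ξ], one has (α₀^ν/(2 L_M))·exp((N_M/(a L_m))·α₀²)·(N_M/(a L_m))^{(ν−1)/2}·[γ((1−ν)/2, η²·N_M/(a L_m)) − γ((1−ν)/2, α₀²·N_M/(a L_m))] ≤ Φ(η,u) ≤ (α₀^ν/(2 L_m))·exp((N_m/(a L_M))·α₀²)·(N_m/(a L_M))^{(ν−1)/2}·[γ((1−ν)/2, η²·N_m/(a L_M)) − γ((1−ν)/2, α₀²·N_m/(a L_M))]. -/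
open Real MeasureTheory Set

/-- `E(η,u) = exp(−(2/a)·∫_{α₀}^{η} s·N*(u(s))/L*(u(s)) ds)` -/
noncomputable def Efun (a : ℝ) (L N : ℝ → ℝ) (α₀ : ℝ) (u : ℝ → ℝ) (η : ℝ) : ℝ :=
  Real.exp (-(2 / a) * ∫ s in α₀..η, s * N (u s) / L (u s))

/-- `Φ(η,u) = α₀^ν·∫_{α₀}^{η} E(v,u)/(v^ν·L*(u(v))) dv` -/
noncomputable def Phi (a ν : ℝ) (L N : ℝ → ℝ) (α₀ : ℝ) (u : ℝ → ℝ) (η : ℝ) : ℝ :=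
  α₀ ^ ν * ∫ v in α₀..η, Efun a L N α₀ u v / (v ^ ν * L (u v))

/-- Lower incomplete gamma function `γ(s,x) = ∫₀ˣ t^{s−1} e^{−t} dt`. -/
noncomputable def lowerGamma (s x : ℝ) : ℝ :=
  ∫ t in (0 : ℝ)..x, t ^ (s - 1) * Real.exp (-t)

/-! The bounds on `L*` and `N*` squeeze the exponent of `E(v,u)` between
`(N_m/(a L_M))(v² − α₀²)` and `(N_M/(a L_m))(v² − α₀²)`, hence squeeze the integrand of `Φ`
between the explicit integrands `exp(−c(v² − α₀²))/(v^ν K)`. These integrate in closed form: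
the substitution `t = c v²` turns `∫ v^{−ν} e^{−c v²} dv` into
`(c^{(ν−1)/2}/2) ∫ t^{(1−ν)/2 − 1} e^{−t} dt`, a difference of two values of `γ((1−ν)/2, ·)`. -/

lemma lowerGamma_sub_lowerGamma {s : ℝ} (hs : 0 < s) (x y : ℝ) :
    lowerGamma s y - lowerGamma s x = ∫ t in x..y, t ^ (s - 1) * exp (-t) := by
  have hint (p q : ℝ) : IntervalIntegrable (fun t => t ^ (s - 1) * exp (-t)) volume p q :=
    (intervalIntegral.intervalIntegrable_rpow' (by linarith)).mul_continuousOn (by fun_prop)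
  rw [lowerGamma, lowerGamma,
    ← intervalIntegral.integral_add_adjacent_intervals (hint 0 x) (hint x y), add_sub_cancel_left]

lemma integral_rpow_mul_exp_neg_mul_sq {c s A B : ℝ} (hc : 0 < c) (hA : 0 < A) (hB : 0 < B) :
    ∫ v in A..B, v ^ (2 * s - 1) * exp (-(c * v ^ 2)) =
      c ^ (-s) / 2 * ∫ t in (c * A ^ 2)..(c * B ^ 2), t ^ (s - 1) * exp (-t) := by
  have hpos : ∀ v ∈ uIcc A B, 0 < v := fun v hv => (lt_min hA hB).trans_le hv.1
  rw [← intervalIntegral.integral_comp_mul_deriv' (f := fun v => c * v ^ 2)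
    (f' := fun v => 2 * c * v)
    (fun v _ => by
      simpa [mul_comm, mul_assoc, mul_left_comm] using (hasDerivAt_pow 2 v).const_mul c)
    (by fun_prop)]
  · rw [← intervalIntegral.integral_const_mul]
    refine intervalIntegral.integral_congr fun v hv => ?_
    have hv0 := hpos v hv
    simp only [Function.comp_apply]
    rw [mul_rpow hc.le (by positivity), ← rpow_natCast v 2, ← rpow_mul hv0.le, rpow_neg hc.le,
      rpow_sub_one hc.ne', show 2 * s - 1 = ((2 : ℕ) : ℝ) * (s - 1) + 1 by push_cast; ring,
      rpow_add_one hv0.ne']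
    field_simp
  · refine ContinuousOn.mul (ContinuousOn.rpow_const continuousOn_id ?_) (by fun_prop)
    rintro _ ⟨v, hv, rfl⟩
    exact Or.inl (by have := hpos v hv; positivity)

lemma integral_rpow_neg_mul_exp_neg_mul_sq {c ν A B : ℝ} (hc : 0 < c) (hν : ν < 1)
    (hA : 0 < A) (hB : 0 < B) :
    ∫ v in A..B, v ^ (-ν) * exp (-(c * v ^ 2)) =
      c ^ ((ν - 1) / 2) / 2 *
        (lowerGamma ((1 - ν) / 2) (B ^ 2 * c) - lowerGamma ((1 - ν) / 2) (A ^ 2 * c)) := by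
  have h := integral_rpow_mul_exp_neg_mul_sq (s := (1 - ν) / 2) hc hA hB
  rw [show 2 * ((1 - ν) / 2) - 1 = -ν by ring, show -((1 - ν) / 2) = (ν - 1) / 2 by ring] at h
  rw [h, lowerGamma_sub_lowerGamma (by linarith), mul_comm (B ^ 2), mul_comm (A ^ 2)]

lemma integral_exp_neg_mul_sq_sub_div {c ν A B : ℝ} (K : ℝ) (hc : 0 < c) (hν : ν < 1)
    (hA : 0 < A) (hB : 0 < B) :
    ∫ v in A..B, exp (-(c * (v ^ 2 - A ^ 2))) / (v ^ ν * K) =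
      exp (c * A ^ 2) / (2 * K) * c ^ ((ν - 1) / 2) *
        (lowerGamma ((1 - ν) / 2) (B ^ 2 * c) - lowerGamma ((1 - ν) / 2) (A ^ 2 * c)) := by
  have hpos : ∀ v ∈ uIcc A B, 0 < v := fun v hv => (lt_min hA hB).trans_le hv.1
  have hcongr : ∀ v ∈ uIcc A B, exp (-(c * (v ^ 2 - A ^ 2))) / (v ^ ν * K) =
      exp (c * A ^ 2) / K * (v ^ (-ν) * exp (-(c * v ^ 2))) := fun v hv => by
    rw [rpow_neg (hpos v hv).le, show -(c * (v ^ 2 - A ^ 2)) = c * A ^ 2 + -(c * v ^ 2) by ring,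
      exp_add]
    ring
  rw [intervalIntegral.integral_congr hcongr, intervalIntegral.integral_const_mul,
    integral_rpow_neg_mul_exp_neg_mul_sq hc hν hA hB]
  ring

lemma continuousOn_div_rpow_mul {f g : ℝ → ℝ} {S : Set ℝ} (ν : ℝ) (hf : ContinuousOn f S)
    (hg : ContinuousOn g S) (hpos : ∀ v ∈ S, 0 < v ∧ 0 < g v) :
    ContinuousOn (fun v => f v / (v ^ ν * g v)) S :=
  hf.div ((continuousOn_id.rpow_const fun v hv => Or.inl (hpos v hv).1.ne').mul hg)
    fun v hv => (mul_pos (rpow_pos_of_pos (hpos v hv).1 ν) (hpos v hv).2).ne'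

lemma intervalIntegrable_exp_neg_mul_sq_sub_div {c ν A B K : ℝ} (hK : 0 < K) (hA : 0 < A)
    (hAB : A ≤ B) :
    IntervalIntegrable (fun v => exp (-(c * (v ^ 2 - A ^ 2))) / (v ^ ν * K)) volume A B :=
  (continuousOn_div_rpow_mul ν (by fun_prop) continuousOn_const fun v hv =>
    ⟨hA.trans_le hv.1, hK⟩).intervalIntegrable_of_Icc hAB

lemma integral_id_mul_mem_Icc {g : ℝ → ℝ} {m M A B : ℝ} (hA : 0 ≤ A) (hAB : A ≤ B)
    (hg : IntervalIntegrable (fun s => s * g s) volume A B) (hgb : ∀ s ∈ Icc A B, g s ∈ Icc m M) :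
    ∫ s in A..B, s * g s ∈ Icc (m * ((B ^ 2 - A ^ 2) / 2)) (M * ((B ^ 2 - A ^ 2) / 2)) := by
  have hlin (k : ℝ) : ∫ s in A..B, s * k = k * ((B ^ 2 - A ^ 2) / 2) := by
    rw [intervalIntegral.integral_mul_const, integral_id, mul_comm]
  have hk (k : ℝ) : IntervalIntegrable (fun s => s * k) volume A B :=
    (continuous_id.mul continuous_const).intervalIntegrable _ _
  rw [← hlin, ← hlin]
  exact ⟨intervalIntegral.integral_mono_on hAB (hk m) hg fun s hs =>
      mul_le_mul_of_nonneg_left (hgb s hs).1 (hA.trans hs.1),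
    intervalIntegral.integral_mono_on hAB hg (hk M) fun s hs =>
      mul_le_mul_of_nonneg_left (hgb s hs).2 (hA.trans hs.1)⟩

section Phi

variable {a ν α₀ : ℝ} {L N u : ℝ → ℝ}

lemma Efun_mem_Icc {v p q : ℝ} (ha : 0 < a) (hα₀ : 0 ≤ α₀) (hv : α₀ ≤ v)
    (hint : IntervalIntegrable (fun s => s * N (u s) / L (u s)) volume α₀ v)
    (hratio : ∀ s ∈ Icc α₀ v, N (u s) / L (u s) ∈ Icc (a * p) (a * q)) :
    Efun a L N α₀ u v ∈ Icc (exp (-(q * (v ^ 2 - α₀ ^ 2)))) (exp (-(p * (v ^ 2 - α₀ ^ 2)))) := by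
  have hI : ∫ s in α₀..v, s * N (u s) / L (u s) ∈
      Icc (a * p * ((v ^ 2 - α₀ ^ 2) / 2)) (a * q * ((v ^ 2 - α₀ ^ 2) / 2)) := by
    simp only [mul_div_assoc] at hint ⊢
    exact integral_id_mul_mem_Icc hα₀ hv hint hratio
  have h2a : 0 ≤ 2 / a := by positivity
  have hscale (k : ℝ) : 2 / a * (a * k * ((v ^ 2 - α₀ ^ 2) / 2)) = k * (v ^ 2 - α₀ ^ 2) := by
    field_simp
  rw [Efun]
  constructor <;> apply exp_le_exp.mpr <;> rw [neg_mul, neg_le_neg_iff, ← hscale]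
  · exact mul_le_mul_of_nonneg_left hI.2 h2a
  · exact mul_le_mul_of_nonneg_left hI.1 h2a

lemma continuousOn_Efun {η : ℝ} (hαη : α₀ ≤ η)
    (hcont : ContinuousOn (fun s => s * N (u s) / L (u s)) (Icc α₀ η)) :
    ContinuousOn (Efun a L N α₀ u) (Icc α₀ η) := by
  rw [← uIcc_of_le hαη] at hcont ⊢
  exact continuous_exp.comp_continuousOn (continuousOn_const.mul
    (intervalIntegral.continuousOn_primitive_interval hcont.integrableOn_uIcc))

lemma intervalIntegrable_Efun_div {η : ℝ} (hα₀ : 0 < α₀) (hαη : α₀ ≤ η)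
    (hcont : ContinuousOn (fun s => s * N (u s) / L (u s)) (Icc α₀ η))
    (hLu : ContinuousOn (fun v => L (u v)) (Icc α₀ η)) (hLpos : ∀ v ∈ Icc α₀ η, 0 < L (u v)) :
    IntervalIntegrable (fun v => Efun a L N α₀ u v / (v ^ ν * L (u v))) volume α₀ η :=
  (continuousOn_div_rpow_mul ν (continuousOn_Efun hαη hcont) hLu fun v hv =>
    ⟨hα₀.trans_le hv.1, hLpos v hv⟩).intervalIntegrable_of_Icc hαη

lemma le_Phi {η c K : ℝ} (hc : 0 < c) (hν : ν < 1) (hα₀ : 0 < α₀) (hαη : α₀ ≤ η)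
    (hint : IntervalIntegrable (fun v => Efun a L N α₀ u v / (v ^ ν * L (u v))) volume α₀ η)
    (hK : 0 < K) (hE : ∀ v ∈ Icc α₀ η, exp (-(c * (v ^ 2 - α₀ ^ 2))) ≤ Efun a L N α₀ u v)
    (hL : ∀ v ∈ Icc α₀ η, 0 < L (u v) ∧ L (u v) ≤ K) :
    α₀ ^ ν / (2 * K) * exp (c * α₀ ^ 2) * c ^ ((ν - 1) / 2) *
        (lowerGamma ((1 - ν) / 2) (η ^ 2 * c) - lowerGamma ((1 - ν) / 2) (α₀ ^ 2 * c)) ≤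
      Phi a ν L N α₀ u η := by
  have hmono := intervalIntegral.integral_mono_on hαη
    (intervalIntegrable_exp_neg_mul_sq_sub_div hK hα₀ hαη) hint fun v hv =>
    have hvν := rpow_pos_of_pos (hα₀.trans_le hv.1) ν
    div_le_div₀ (exp_pos _).le (hE v hv) (mul_pos hvν (hL v hv).1)
      (mul_le_mul_of_nonneg_left (hL v hv).2 hvν.le)
  rw [integral_exp_neg_mul_sq_sub_div K hc hν hα₀ (hα₀.trans_le hαη)] at hmono
  calc _ = α₀ ^ ν * (exp (c * α₀ ^ 2) / (2 * K) * c ^ ((ν - 1) / 2) *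
        (lowerGamma ((1 - ν) / 2) (η ^ 2 * c) - lowerGamma ((1 - ν) / 2) (α₀ ^ 2 * c))) := by ring
    _ ≤ _ := mul_le_mul_of_nonneg_left hmono (rpow_pos_of_pos hα₀ ν).le

lemma Phi_le {η c K : ℝ} (hc : 0 < c) (hν : ν < 1) (hα₀ : 0 < α₀) (hαη : α₀ ≤ η)
    (hint : IntervalIntegrable (fun v => Efun a L N α₀ u v / (v ^ ν * L (u v))) volume α₀ η)
    (hK : 0 < K) (hE : ∀ v ∈ Icc α₀ η, Efun a L N α₀ u v ≤ exp (-(c * (v ^ 2 - α₀ ^ 2))))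
    (hL : ∀ v ∈ Icc α₀ η, K ≤ L (u v)) :
    Phi a ν L N α₀ u η ≤
      α₀ ^ ν / (2 * K) * exp (c * α₀ ^ 2) * c ^ ((ν - 1) / 2) *
        (lowerGamma ((1 - ν) / 2) (η ^ 2 * c) - lowerGamma ((1 - ν) / 2) (α₀ ^ 2 * c)) := by
  have hmono := intervalIntegral.integral_mono_on hαη hint
    (intervalIntegrable_exp_neg_mul_sq_sub_div hK hα₀ hαη) fun v hv =>
    have hvν := rpow_pos_of_pos (hα₀.trans_le hv.1) ν
    div_le_div₀ (exp_pos _).le (hE v hv) (mul_pos hvν hK)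
      (mul_le_mul_of_nonneg_left (hL v hv) hvν.le)
  rw [integral_exp_neg_mul_sq_sub_div K hc hν hα₀ (hα₀.trans_le hαη)] at hmono
  calc Phi a ν L N α₀ u η ≤ α₀ ^ ν * (exp (c * α₀ ^ 2) / (2 * K) * c ^ ((ν - 1) / 2) *
        (lowerGamma ((1 - ν) / 2) (η ^ 2 * c) - lowerGamma ((1 - ν) / 2) (α₀ ^ 2 * c))) :=
      mul_le_mul_of_nonneg_left hmono (rpow_pos_of_pos hα₀ ν).le
    _ = _ := by ring

end Phi

theorem stmt_1_general (a ν α₀ ξ : ℝ) (L N : ℝ → ℝ) (Lm LM Nm NM : ℝ)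
    (ha : 0 < a) (hν1 : ν < 1) (hα₀ : 0 < α₀)
    (hLcont : Continuous L) (hNcont : Continuous N)
    (hLm : 0 < Lm) (hNm : 0 < Nm)
    (hL : ∀ x : ℝ, Lm ≤ L x ∧ L x ≤ LM)
    (hN : ∀ x : ℝ, Nm ≤ N x ∧ N x ≤ NM) :
    ∀ u : ℝ → ℝ, ContinuousOn u (Icc α₀ ξ) → ∀ η ∈ Icc α₀ ξ,
      (α₀ ^ ν / (2 * LM)) * Real.exp ((NM / (a * Lm)) * α₀ ^ 2) *
          (NM / (a * Lm)) ^ ((ν - 1) / 2) *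
          (lowerGamma ((1 - ν) / 2) (η ^ 2 * (NM / (a * Lm))) -
            lowerGamma ((1 - ν) / 2) (α₀ ^ 2 * (NM / (a * Lm)))) ≤
        Phi a ν L N α₀ u η ∧
      Phi a ν L N α₀ u η ≤
        (α₀ ^ ν / (2 * Lm)) * Real.exp ((Nm / (a * LM)) * α₀ ^ 2) *
          (Nm / (a * LM)) ^ ((ν - 1) / 2) *
          (lowerGamma ((1 - ν) / 2) (η ^ 2 * (Nm / (a * LM))) -
            lowerGamma ((1 - ν) / 2) (α₀ ^ 2 * (Nm / (a * LM)))) := by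
  intro u hu η ⟨hαη, hηξ⟩
  have hLpos (x : ℝ) : 0 < L x := hLm.trans_le (hL x).1
  have hLM : 0 < LM := (hLpos 0).trans_le (hL 0).2
  have hNM : 0 < NM := hNm.trans_le ((hN 0).1.trans (hN 0).2)
  have hu' : ContinuousOn u (Icc α₀ η) := hu.mono (Icc_subset_Icc_right hηξ)
  have hLu : ContinuousOn (fun v => L (u v)) (Icc α₀ η) := hLcont.comp_continuousOn hu'
  have hinner : ContinuousOn (fun s => s * N (u s) / L (u s)) (Icc α₀ η) :=
    (continuousOn_id.mul (hNcont.comp_continuousOn hu')).div hLu fun v _ => (hLpos _).ne'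
  have hratio (x : ℝ) : N x / L x ∈ Icc (a * (Nm / (a * LM))) (a * (NM / (a * Lm))) := by
    rw [← mul_div_assoc, ← mul_div_assoc, mul_div_mul_left _ _ ha.ne', mul_div_mul_left _ _ ha.ne']
    exact ⟨div_le_div₀ (hNm.trans_le (hN x).1).le (hN x).1 (hLpos x) (hL x).2,
      div_le_div₀ hNM.le (hN x).2 hLm (hL x).1⟩
  have hE (v : ℝ) (hv : v ∈ Icc α₀ η) := Efun_mem_Icc ha hα₀.le hv.1
    ((hinner.mono (Icc_subset_Icc_right hv.2)).intervalIntegrable_of_Icc hv.1)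
    fun s _ => hratio (u s)
  have hint := intervalIntegrable_Efun_div (a := a) (ν := ν) hα₀ hαη hinner hLu fun v _ => hLpos _
  exact ⟨le_Phi (by positivity) hν1 hα₀ hαη hint hLM (fun v hv => (hE v hv).1)
      fun v _ => ⟨hLpos _, (hL _).2⟩,
    Phi_le (by positivity) hν1 hα₀ hαη hint hLm (fun v hv => (hE v hv).2) fun v _ => (hL _).1⟩

theorem stmt_1 (a ν α₀ ξ : ℝ) (L N : ℝ → ℝ) (Lm LM Nm NM : ℝ)
    (ha : 0 < a) (hν0 : 0 < ν) (hν1 : ν < 1) (hα₀ : 0 < α₀) (hαξ : α₀ < ξ)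
    (hLcont : Continuous L) (hNcont : Continuous N)
    (hLm : 0 < Lm) (hNm : 0 < Nm)
    (hL : ∀ x : ℝ, Lm ≤ L x ∧ L x ≤ LM)
    (hN : ∀ x : ℝ, Nm ≤ N x ∧ N x ≤ NM) :
    ∀ u : ℝ → ℝ, ContinuousOn u (Icc α₀ ξ) → ∀ η ∈ Icc α₀ ξ,
      (α₀ ^ ν / (2 * LM)) * Real.exp ((NM / (a * Lm)) * α₀ ^ 2) *
          (NM / (a * Lm)) ^ ((ν - 1) / 2) *
          (lowerGamma ((1 - ν) / 2) (η ^ 2 * (NM / (a * Lm))) -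
            lowerGamma ((1 - ν) / 2) (α₀ ^ 2 * (NM / (a * Lm)))) ≤
        Phi a ν L N α₀ u η ∧
      Phi a ν L N α₀ u η ≤
        (α₀ ^ ν / (2 * Lm)) * Real.exp ((Nm / (a * LM)) * α₀ ^ 2) *
          (Nm / (a * LM)) ^ ((ν - 1) / 2) *
          (lowerGamma ((1 - ν) / 2) (η ^ 2 * (Nm / (a * LM))) -
            lowerGamma ((1 - ν) / 2) (α₀ ^ 2 * (Nm / (a * LM)))) :=
  stmt_1_general a ν α₀ ξ L N Lm LM Nm NM ha hν1 hα₀ hLcont hNcont hLm hNm hL hN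
end

section
/- For all continuous functions u, u* : [α₀, ξ] → ℝ and every η ∈ [α₀, ξ], one has |E(η,u) − E(η,u*)| ≤ (1/(a·L_m))·(Ñ + N_M·L̃/L_m)·(η² − α₀²)·‖u − u*‖, where ‖·‖ denotes the supremum norm on [α₀, ξ]. -/
open Real MeasureTheory Set

/-- Supremum norm on the interval `[α₀, ξ]`. -/
noncomputable def supNorm (α₀ ξ : ℝ) (f : ℝ → ℝ) : ℝ :=
  ⨆ η : Icc α₀ ξ, |f η|

/-!
The exponent of `E(η,u)` is `-(2/a)` times a nonnegative integral, and `t ↦ exp (-t)` is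
1-Lipschitz on `[0, ∞)`, so it suffices to compare the two integrals. By the quotient rule
for Lipschitz bounds, `N*/L*` is Lipschitz with constant `Ñ/L_m + N_M·L̃/L_m²`, hence the
integrands differ by at most `s·(Ñ/L_m + N_M·L̃/L_m²)·‖u − u*‖`, and `∫_{α₀}^{η} s ds = (η² − α₀²)/2`.
-/

lemma exp_neg_sub_exp_neg_le {x y : ℝ} (hx : 0 ≤ x) (hxy : x ≤ y) :
    exp (-x) - exp (-y) ≤ y - x := by
  have hsplit : exp (-x) - exp (-y) = exp (-x) * (1 - exp (-(y - x))) := by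
    rw [mul_sub, ← exp_add]; ring_nf
  have hdecay : 0 ≤ 1 - exp (-(y - x)) := by
    linarith [exp_le_one_iff.2 (neg_nonpos.2 (sub_nonneg.2 hxy))]
  calc exp (-x) - exp (-y) = exp (-x) * (1 - exp (-(y - x))) := hsplit
    _ ≤ 1 - exp (-(y - x)) := mul_le_of_le_one_left hdecay (exp_le_one_iff.2 (neg_nonpos.2 hx))
    _ ≤ y - x := by linarith [one_sub_le_exp_neg (y - x)]

lemma abs_exp_neg_sub_exp_neg_le {x y : ℝ} (hx : 0 ≤ x) (hy : 0 ≤ y) :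
    |exp (-x) - exp (-y)| ≤ |x - y| := by
  wlog hxy : x ≤ y generalizing x y
  · rw [abs_sub_comm, abs_sub_comm x]
    exact this hy hx (le_of_not_ge hxy)
  rw [abs_of_nonneg (sub_nonneg.2 (exp_le_exp.2 (neg_le_neg hxy))), abs_sub_comm,
    abs_of_nonneg (sub_nonneg.2 hxy)]
  exact exp_neg_sub_exp_neg_le hx hxy

lemma abs_div_sub_div_le {n₁ n₂ l₁ l₂ m K : ℝ} (hm : 0 < m) (hl₁ : m ≤ l₁) (hl₂ : m ≤ l₂)
    (hn₂ : |n₂| ≤ K) :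
    |n₁ / l₁ - n₂ / l₂| ≤ |n₁ - n₂| / m + K * |l₁ - l₂| / m ^ 2 := by
  have h₁ : 0 < l₁ := hm.trans_le hl₁
  have h₂ : 0 < l₂ := hm.trans_le hl₂
  have hsplit : n₁ / l₁ - n₂ / l₂ = (n₁ - n₂) / l₁ + n₂ * (l₂ - l₁) / (l₁ * l₂) := by
    field_simp; ring
  rw [hsplit]
  refine (abs_add_le _ _).trans (add_le_add ?_ ?_)
  · rw [abs_div, abs_of_pos h₁]
    exact div_le_div_of_nonneg_left (abs_nonneg _) hm hl₁
  · rw [abs_div, abs_mul, abs_of_pos (mul_pos h₁ h₂), abs_sub_comm l₂, sq]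
    exact div_le_div₀ (mul_nonneg ((abs_nonneg _).trans hn₂) (abs_nonneg _))
      (mul_le_mul_of_nonneg_right hn₂ (abs_nonneg _)) (mul_pos hm hm)
      (mul_le_mul hl₁ hl₂ hm.le h₁.le)

lemma abs_div_comp_sub_div_comp_le {L N : ℝ → ℝ} {Lm NM Ltil Ntil : ℝ} (hLm : 0 < Lm)
    (hL : ∀ x, Lm ≤ L x) (hN : ∀ x, |N x| ≤ NM)
    (hLlip : ∀ x y : ℝ, |L x - L y| ≤ Ltil * |x - y|)
    (hNlip : ∀ x y : ℝ, |N x - N y| ≤ Ntil * |x - y|) (x y : ℝ) :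
    |N x / L x - N y / L y| ≤ (Ntil / Lm + NM * Ltil / Lm ^ 2) * |x - y| := by
  have hNM : 0 ≤ NM := (abs_nonneg _).trans (hN x)
  calc |N x / L x - N y / L y| ≤ |N x - N y| / Lm + NM * |L x - L y| / Lm ^ 2 :=
        abs_div_sub_div_le hLm (hL x) (hL y) (hN y)
    _ ≤ Ntil * |x - y| / Lm + NM * (Ltil * |x - y|) / Lm ^ 2 := by
        gcongr
        exacts [hNlip x y, hLlip x y]
    _ = (Ntil / Lm + NM * Ltil / Lm ^ 2) * |x - y| := by ring

lemma abs_le_supNorm {α₀ ξ x : ℝ} {f : ℝ → ℝ} (hf : ContinuousOn f (Icc α₀ ξ))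
    (hx : x ∈ Icc α₀ ξ) : |f x| ≤ supNorm α₀ ξ f := by
  have hbdd : BddAbove (range fun y : Icc α₀ ξ => |f y|) := by
    simpa only [image_eq_range] using (isCompact_Icc.image_of_continuousOn hf.abs).bddAbove
  exact le_ciSup hbdd ⟨x, hx⟩

lemma abs_integral_sub_integral_le {f g : ℝ → ℝ} {a b K : ℝ} (hab : a ≤ b)
    (hf : IntervalIntegrable f volume a b) (hg : IntervalIntegrable g volume a b)
    (hfg : ∀ s ∈ Icc a b, |f s - g s| ≤ K * s) :
    |(∫ s in a..b, f s) - ∫ s in a..b, g s| ≤ K * ((b ^ 2 - a ^ 2) / 2) := by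
  rw [← intervalIntegral.integral_sub hf hg, ← integral_id,
    ← intervalIntegral.integral_const_mul]
  exact intervalIntegral.norm_integral_le_of_norm_le hab
    (g := fun s => K * s) (ae_of_all _ fun s hs => (norm_eq_abs _).trans_le
      (hfg s (Ioc_subset_Icc_self hs)))
    ((continuous_const.mul continuous_id).intervalIntegrable _ _)

lemma intervalIntegrable_mul_comp_div_comp {L N u : ℝ → ℝ} {a b : ℝ} (hL : Continuous L)
    (hN : Continuous N) (hL0 : ∀ x, L x ≠ 0) (hu : ContinuousOn u (uIcc a b)) :
    IntervalIntegrable (fun s => s * N (u s) / L (u s)) volume a b :=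
  ((continuousOn_id.mul (hN.comp_continuousOn hu)).div (hL.comp_continuousOn hu)
    fun _ _ => hL0 _).intervalIntegrable

lemma abs_Efun_sub_Efun_le {a α₀ η K : ℝ} {L N u v : ℝ → ℝ} (ha : 0 < a) (hα₀ : 0 ≤ α₀)
    (hα₀η : α₀ ≤ η) (hNL : ∀ x, 0 ≤ N x / L x)
    (hu : IntervalIntegrable (fun s => s * N (u s) / L (u s)) volume α₀ η)
    (hv : IntervalIntegrable (fun s => s * N (v s) / L (v s)) volume α₀ η)
    (huv : ∀ s ∈ Icc α₀ η, |N (u s) / L (u s) - N (v s) / L (v s)| ≤ K) :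
    |Efun a L N α₀ u η - Efun a L N α₀ v η| ≤ K / a * (η ^ 2 - α₀ ^ 2) := by
  have hI : ∀ w : ℝ → ℝ, 0 ≤ ∫ s in α₀..η, s * N (w s) / L (w s) := fun w =>
    intervalIntegral.integral_nonneg hα₀η fun s hs => by
      rw [mul_div_assoc]; exact mul_nonneg (hα₀.trans hs.1) (hNL _)
  have hintegrands : ∀ s ∈ Icc α₀ η,
      |s * N (u s) / L (u s) - s * N (v s) / L (v s)| ≤ K * s := fun s hs => by
    rw [mul_div_assoc, mul_div_assoc, ← mul_sub, abs_mul, abs_of_nonneg (hα₀.trans hs.1),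
      mul_comm K]
    exact mul_le_mul_of_nonneg_left (huv s hs) (hα₀.trans hs.1)
  unfold Efun
  rw [neg_mul, neg_mul]
  calc _ ≤ |2 / a * (∫ s in α₀..η, s * N (u s) / L (u s))
          - 2 / a * ∫ s in α₀..η, s * N (v s) / L (v s)| :=
        abs_exp_neg_sub_exp_neg_le (mul_nonneg (by positivity) (hI u))
          (mul_nonneg (by positivity) (hI v))
    _ = 2 / a * |(∫ s in α₀..η, s * N (u s) / L (u s))
          - ∫ s in α₀..η, s * N (v s) / L (v s)| := by
        rw [← mul_sub, abs_mul, abs_of_pos (by positivity)]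
    _ ≤ 2 / a * (K * ((η ^ 2 - α₀ ^ 2) / 2)) := by
        gcongr
        exact abs_integral_sub_integral_le hα₀η hu hv hintegrands
    _ = K / a * (η ^ 2 - α₀ ^ 2) := by field_simp

theorem stmt_2_general (a α₀ ξ : ℝ) (L N : ℝ → ℝ) (Lm LM Nm NM Ltil Ntil : ℝ)
    (ha : 0 < a) (hα₀ : 0 < α₀)
    (hLcont : Continuous L) (hNcont : Continuous N)
    (hLm : 0 < Lm) (hNm : 0 < Nm) (hLtil : 0 < Ltil) (hNtil : 0 < Ntil)
    (hL : ∀ x : ℝ, Lm ≤ L x ∧ L x ≤ LM)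
    (hN : ∀ x : ℝ, Nm ≤ N x ∧ N x ≤ NM)
    (hLlip : ∀ x y : ℝ, |L x - L y| ≤ Ltil * |x - y|)
    (hNlip : ∀ x y : ℝ, |N x - N y| ≤ Ntil * |x - y|) :
    ∀ u ustar : ℝ → ℝ, ContinuousOn u (Icc α₀ ξ) → ContinuousOn ustar (Icc α₀ ξ) →
      ∀ η ∈ Icc α₀ ξ,
        |Efun a L N α₀ u η - Efun a L N α₀ ustar η| ≤
          (1 / (a * Lm)) * (Ntil + NM * Ltil / Lm) * (η ^ 2 - α₀ ^ 2) *
            supNorm α₀ ξ (fun x => u x - ustar x) := by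
  intro u ustar hu hustar η ⟨hα₀η, hηξ⟩
  have hLpos : ∀ x, 0 < L x := fun x => hLm.trans_le (hL x).1
  have hNpos : ∀ x, 0 < N x := fun x => hNm.trans_le (hN x).1
  have hNM : 0 < NM := (hNpos 0).trans_le (hN 0).2
  have hsub : uIcc α₀ η ⊆ Icc α₀ ξ :=
    uIcc_subset_Icc ⟨le_rfl, hα₀η.trans hηξ⟩ ⟨hα₀η, hηξ⟩
  have hintegrands : ∀ s ∈ Icc α₀ η, |N (u s) / L (u s) - N (ustar s) / L (ustar s)| ≤
      (Ntil / Lm + NM * Ltil / Lm ^ 2) * supNorm α₀ ξ (fun x => u x - ustar x) :=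
    fun s hs => (abs_div_comp_sub_div_comp_le hLm (fun x => (hL x).1)
      (fun x => (abs_of_pos (hNpos x)).trans_le (hN x).2) hLlip hNlip _ _).trans <| by
        gcongr
        exact abs_le_supNorm (hu.sub hustar) (hsub (Icc_subset_uIcc hs))
  calc _ ≤ _ := abs_Efun_sub_Efun_le ha hα₀.le hα₀η (fun x => (div_pos (hNpos x) (hLpos x)).le)
        (intervalIntegrable_mul_comp_div_comp hLcont hNcont (fun x => (hLpos x).ne')
          (hu.mono hsub))
        (intervalIntegrable_mul_comp_div_comp hLcont hNcont (fun x => (hLpos x).ne')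
          (hustar.mono hsub))
        hintegrands
    _ = _ := by field_simp

theorem stmt_2 (a ν α₀ ξ : ℝ) (L N : ℝ → ℝ) (Lm LM Nm NM Ltil Ntil : ℝ)
    (ha : 0 < a) (hν0 : 0 < ν) (hν1 : ν < 1) (hα₀ : 0 < α₀) (hαξ : α₀ < ξ)
    (hLcont : Continuous L) (hNcont : Continuous N)
    (hLm : 0 < Lm) (hNm : 0 < Nm) (hLtil : 0 < Ltil) (hNtil : 0 < Ntil)
    (hL : ∀ x : ℝ, Lm ≤ L x ∧ L x ≤ LM)
    (hN : ∀ x : ℝ, Nm ≤ N x ∧ N x ≤ NM)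
    (hLlip : ∀ x y : ℝ, |L x - L y| ≤ Ltil * |x - y|)
    (hNlip : ∀ x y : ℝ, |N x - N y| ≤ Ntil * |x - y|) :
    ∀ u ustar : ℝ → ℝ, ContinuousOn u (Icc α₀ ξ) → ContinuousOn ustar (Icc α₀ ξ) →
      ∀ η ∈ Icc α₀ ξ,
        |Efun a L N α₀ u η - Efun a L N α₀ ustar η| ≤
          (1 / (a * Lm)) * (Ntil + NM * Ltil / Lm) * (η ^ 2 - α₀ ^ 2) *
            supNorm α₀ ξ (fun x => u x - ustar x) :=
  stmt_2_general a α₀ ξ L N Lm LM Nm NM Ltil Ntil ha hα₀ hLcont hNcont hLm hNm hLtil hNtil hL hN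
    hLlip hNlip
end

section
/- For all continuous functions u, u* : [α₀, ξ] → ℝ and every η ∈ [α₀, ξ], one has |Φ(η,u) − Φ(η,u*)| ≤ Φ̃(α₀, η)·‖u − u*‖, where ‖·‖ denotes the supremum norm on [α₀, ξ] and Φ̃(α₀, η) = (α₀^ν/L_m²)·[(1/a)·(Ñ + N_M·L̃/L_m)·(η^{3−ν}/(3−ν) − α₀²·η^{1−ν}/(1−ν) + 2α₀^{3−ν}/((3−ν)(1−ν))) + L̃·(η^{1−ν} − α₀^{1−ν})/(1−ν)]. -/
open Real MeasureTheory Set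

/-- The Lipschitz bound `Φ̃(α₀, η)` from Lemma 4. -/
noncomputable def PhiTilde (a ν Lm NM Ltil Ntil α₀ η : ℝ) : ℝ :=
  (α₀ ^ ν / Lm ^ 2) *
    ((1 / a) * (Ntil + NM * Ltil / Lm) *
        (η ^ (3 - ν) / (3 - ν) - α₀ ^ 2 * η ^ (1 - ν) / (1 - ν) +
          2 * α₀ ^ (3 - ν) / ((3 - ν) * (1 - ν))) +
      Ltil * (η ^ (1 - ν) - α₀ ^ (1 - ν)) / (1 - ν))

lemma abs_inv_sub_inv_le {m p q : ℝ} (hm : 0 < m) (hp : m ≤ p) (hq : m ≤ q) :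
    |p⁻¹ - q⁻¹| ≤ |p - q| / m ^ 2 := by
  have hp0 := hm.trans_le hp
  have hq0 := hm.trans_le hq
  rw [inv_sub_inv hp0.ne' hq0.ne', abs_div, abs_of_pos (mul_pos hp0 hq0), abs_sub_comm]
  exact div_le_div_of_nonneg_left (abs_nonneg _) (by positivity) (by nlinarith)

lemma abs_div_sub_div_le_of_lipschitz {L N : ℝ → ℝ} {Lm NM Ltil Ntil : ℝ} (hLm : 0 < Lm)
    (hL : ∀ x, Lm ≤ L x) (hN0 : ∀ x, 0 ≤ N x) (hNM : ∀ x, N x ≤ NM)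
    (hLlip : ∀ x y, |L x - L y| ≤ Ltil * |x - y|) (hNlip : ∀ x y, |N x - N y| ≤ Ntil * |x - y|)
    (x y : ℝ) :
    |N x / L x - N y / L y| ≤ (Ntil / Lm + NM * Ltil / Lm ^ 2) * |x - y| := by
  have hLx := hLm.trans_le (hL x)
  have hLy := hLm.trans_le (hL y)
  have hsplit : N x / L x - N y / L y = (N x - N y) / L x + N y * ((L x)⁻¹ - (L y)⁻¹) := by
    field_simp; ring
  have hinv : |(L x)⁻¹ - (L y)⁻¹| ≤ Ltil * |x - y| / Lm ^ 2 :=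
    (abs_inv_sub_inv_le hLm (hL x) (hL y)).trans (by gcongr; exact hLlip x y)
  calc |N x / L x - N y / L y| ≤ |N x - N y| / L x + N y * |(L x)⁻¹ - (L y)⁻¹| := by
        rw [hsplit]
        refine (abs_add_le _ _).trans_eq ?_
        rw [abs_div, abs_mul, abs_of_pos hLx, abs_of_nonneg (hN0 y)]
    _ ≤ Ntil * |x - y| / Lm + NM * (Ltil * |x - y| / Lm ^ 2) := by
        gcongr
        · exact (abs_nonneg _).trans (hNlip x y)
        · exact hNlip x y
        · exact hL x
        · exact (hN0 y).trans (hNM y)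
        · exact hNM y
    _ = (Ntil / Lm + NM * Ltil / Lm ^ 2) * |x - y| := by ring

lemma abs_integral_le_of_abs_le {f g : ℝ → ℝ} {a b : ℝ} (hab : a ≤ b)
    (hfg : ∀ t ∈ Icc a b, |f t| ≤ g t) (hg : IntervalIntegrable g volume a b) :
    |∫ t in a..b, f t| ≤ ∫ t in a..b, g t :=
  intervalIntegral.norm_integral_le_of_norm_le (f := f) hab
    (Filter.Eventually.of_forall fun t ht => hfg t (Ioc_subset_Icc_self ht)) hg

lemma integral_rpow_neg_mul_sq_sub_sq {α η ν : ℝ} (hα : 0 < α) (hη : 0 < η) (hν1 : ν ≠ 1)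
    (hν3 : ν ≠ 3) :
    ∫ v in α..η, v ^ (-ν) * (v ^ 2 - α ^ 2) =
      η ^ (3 - ν) / (3 - ν) - α ^ 2 * η ^ (1 - ν) / (1 - ν) +
        2 * α ^ (3 - ν) / ((3 - ν) * (1 - ν)) := by
  have hpos : ∀ v ∈ uIcc α η, 0 < v := fun v hv => (lt_inf_iff.2 ⟨hα, hη⟩).trans_le hv.1
  have h0 : (0 : ℝ) ∉ uIcc α η := fun h0 => (hpos 0 h0).false
  have hrpow_add_two : ∀ {x r : ℝ}, 0 < x → x ^ (r + 2) = x ^ r * x ^ 2 := fun hx => by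
    exact_mod_cast rpow_add_natCast hx.ne' _ 2
  have hsplit : EqOn (fun v => v ^ (-ν) * (v ^ 2 - α ^ 2))
      (fun v => v ^ (-ν + 2) - α ^ 2 * v ^ (-ν)) (uIcc α η) := fun v hv => by
    simp only [hrpow_add_two (hpos v hv)]; ring
  have hint : ∀ r : ℝ, IntervalIntegrable (fun v => v ^ r) volume α η := fun _ =>
    intervalIntegral.intervalIntegrable_rpow (Or.inr h0)
  rw [intervalIntegral.integral_congr hsplit, intervalIntegral.integral_sub (hint _)
      ((hint _).const_mul _), intervalIntegral.integral_const_mul,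
    integral_rpow (Or.inr ⟨by contrapose! hν3; linarith, h0⟩),
    integral_rpow (Or.inr ⟨by contrapose! hν1; linarith, h0⟩),
    show -ν + 2 + 1 = 3 - ν by ring, show -ν + 1 = 1 - ν by ring]
  have hα3 : α ^ (3 - ν) = α ^ (1 - ν) * α ^ 2 := by
    rw [← hrpow_add_two hα]; ring_nf
  have h1 : 1 - ν ≠ 0 := sub_ne_zero.2 hν1.symm
  have h3 : 3 - ν ≠ 0 := sub_ne_zero.2 hν3.symm
  rw [hα3]
  field_simp
  ring

structure CoeffBounds (L N : ℝ → ℝ) (Lm NM Ltil Ntil : ℝ) : Prop where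
  continuous_L : Continuous L
  continuous_N : Continuous N
  pos : 0 < Lm
  le_L : ∀ x, Lm ≤ L x
  N_nonneg : ∀ x, 0 ≤ N x
  N_le : ∀ x, N x ≤ NM
  lipschitz_L : ∀ x y, |L x - L y| ≤ Ltil * |x - y|
  lipschitz_N : ∀ x y, |N x - N y| ≤ Ntil * |x - y|

noncomputable def ratioLip (Lm NM Ltil Ntil : ℝ) : ℝ := Ntil / Lm + NM * Ltil / Lm ^ 2

namespace CoeffBounds

variable {L N u w : ℝ → ℝ} {a ν α₀ v η M Lm NM Ltil Ntil : ℝ}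

lemma L_pos (h : CoeffBounds L N Lm NM Ltil Ntil) (x : ℝ) : 0 < L x :=
  h.pos.trans_le (h.le_L x)

lemma Ltil_nonneg (h : CoeffBounds L N Lm NM Ltil Ntil) : 0 ≤ Ltil := by
  simpa using (abs_nonneg _).trans (h.lipschitz_L 1 0)

lemma ratioLip_nonneg (h : CoeffBounds L N Lm NM Ltil Ntil) : 0 ≤ ratioLip Lm NM Ltil Ntil := by
  have hNtil : 0 ≤ Ntil := by simpa using (abs_nonneg _).trans (h.lipschitz_N 1 0)
  have hNM : 0 ≤ NM := (h.N_nonneg 0).trans (h.N_le 0)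
  have := h.pos
  have := h.Ltil_nonneg
  unfold ratioLip
  positivity

lemma abs_ratio_sub_le (h : CoeffBounds L N Lm NM Ltil Ntil) (x y : ℝ) :
    |N x / L x - N y / L y| ≤ ratioLip Lm NM Ltil Ntil * |x - y| :=
  abs_div_sub_div_le_of_lipschitz h.pos h.le_L h.N_nonneg h.N_le h.lipschitz_L h.lipschitz_N x y

lemma continuousOn_exponent_integrand (h : CoeffBounds L N Lm NM Ltil Ntil) {s : Set ℝ}
    (hu : ContinuousOn u s) : ContinuousOn (fun t => t * N (u t) / L (u t)) s :=
  (continuousOn_id.mul (h.continuous_N.comp_continuousOn hu)).div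
    (h.continuous_L.comp_continuousOn hu) fun _ _ => (h.L_pos _).ne'

lemma integral_exponent_nonneg (h : CoeffBounds L N Lm NM Ltil Ntil) (hα₀ : 0 ≤ α₀)
    (hv : α₀ ≤ v) : 0 ≤ ∫ s in α₀..v, s * N (u s) / L (u s) :=
  intervalIntegral.integral_nonneg hv fun _ hs =>
    div_nonneg (mul_nonneg (hα₀.trans hs.1) (h.N_nonneg _)) (h.L_pos _).le

lemma Efun_le_one (h : CoeffBounds L N Lm NM Ltil Ntil) (ha : 0 < a) (hα₀ : 0 ≤ α₀)
    (hv : α₀ ≤ v) : Efun a L N α₀ u v ≤ 1 := by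
  have := h.integral_exponent_nonneg (u := u) hα₀ hv
  rw [Efun, exp_le_one_iff, neg_mul, neg_nonpos]
  positivity

lemma abs_integral_exponent_sub_le (h : CoeffBounds L N Lm NM Ltil Ntil) (hα₀ : 0 ≤ α₀)
    (hv : α₀ ≤ v) (hu : ContinuousOn u (Icc α₀ v)) (hw : ContinuousOn w (Icc α₀ v))
    (hM : ∀ s ∈ Icc α₀ v, |u s - w s| ≤ M) :
    |(∫ s in α₀..v, s * N (u s) / L (u s)) - ∫ s in α₀..v, s * N (w s) / L (w s)| ≤
      ratioLip Lm NM Ltil Ntil * M * ((v ^ 2 - α₀ ^ 2) / 2) := by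
  have hint : ∀ {f : ℝ → ℝ}, ContinuousOn f (Icc α₀ v) →
      IntervalIntegrable (fun s => s * N (f s) / L (f s)) volume α₀ v := fun hf =>
    (h.continuousOn_exponent_integrand hf).intervalIntegrable_of_Icc hv
  rw [← intervalIntegral.integral_sub (hint hu) (hint hw), ← integral_id,
    ← intervalIntegral.integral_const_mul]
  refine abs_integral_le_of_abs_le hv (fun s hs => ?_)
    ((continuous_const_mul _).intervalIntegrable _ _)
  have hs0 : 0 ≤ s := hα₀.trans hs.1
  calc |s * N (u s) / L (u s) - s * N (w s) / L (w s)|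
      = s * |N (u s) / L (u s) - N (w s) / L (w s)| := by
        rw [mul_div_assoc, mul_div_assoc, ← mul_sub, abs_mul, abs_of_nonneg hs0]
    _ ≤ s * (ratioLip Lm NM Ltil Ntil * M) := by
        gcongr
        exact (h.abs_ratio_sub_le _ _).trans
          (mul_le_mul_of_nonneg_left (hM s hs) h.ratioLip_nonneg)
    _ = ratioLip Lm NM Ltil Ntil * M * s := by ring

lemma abs_Efun_sub_le (h : CoeffBounds L N Lm NM Ltil Ntil) (ha : 0 < a) (hα₀ : 0 ≤ α₀)
    (hv : α₀ ≤ v) (hu : ContinuousOn u (Icc α₀ v)) (hw : ContinuousOn w (Icc α₀ v))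
    (hM : ∀ s ∈ Icc α₀ v, |u s - w s| ≤ M) :
    |Efun a L N α₀ u v - Efun a L N α₀ w v| ≤
      ratioLip Lm NM Ltil Ntil * M * (v ^ 2 - α₀ ^ 2) / a := by
  have hIu := h.integral_exponent_nonneg (u := u) hα₀ hv
  have hIw := h.integral_exponent_nonneg (u := w) hα₀ hv
  calc |Efun a L N α₀ u v - Efun a L N α₀ w v|
      ≤ |2 / a * (∫ s in α₀..v, s * N (u s) / L (u s)) -
          2 / a * ∫ s in α₀..v, s * N (w s) / L (w s)| := by
        simp only [Efun, neg_mul]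
        exact abs_exp_neg_sub_exp_neg_le (by positivity) (by positivity)
    _ = 2 / a * |(∫ s in α₀..v, s * N (u s) / L (u s)) -
          ∫ s in α₀..v, s * N (w s) / L (w s)| := by
        rw [← mul_sub, abs_mul, abs_of_pos (by positivity)]
    _ ≤ 2 / a * (ratioLip Lm NM Ltil Ntil * M * ((v ^ 2 - α₀ ^ 2) / 2)) := by
        gcongr
        exact h.abs_integral_exponent_sub_le hα₀ hv hu hw hM
    _ = ratioLip Lm NM Ltil Ntil * M * (v ^ 2 - α₀ ^ 2) / a := by
        field_simp

lemma abs_Phi_integrand_sub_le (h : CoeffBounds L N Lm NM Ltil Ntil) (ha : 0 < a) (hα₀ : 0 < α₀)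
    (hv : α₀ ≤ v) (hu : ContinuousOn u (Icc α₀ v)) (hw : ContinuousOn w (Icc α₀ v))
    (hM : ∀ s ∈ Icc α₀ v, |u s - w s| ≤ M) :
    |Efun a L N α₀ u v / (v ^ ν * L (u v)) - Efun a L N α₀ w v / (v ^ ν * L (w v))| ≤
      ratioLip Lm NM Ltil Ntil * M / (a * Lm) * (v ^ (-ν) * (v ^ 2 - α₀ ^ 2)) +
        Ltil * M / Lm ^ 2 * v ^ (-ν) := by
  have hv0 : 0 < v := hα₀.trans_le hv
  have hvν : 0 < v ^ ν := rpow_pos_of_pos hv0 ν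
  have hLu := h.L_pos (u v)
  have hLw := h.L_pos (w v)
  have hEw : 0 < Efun a L N α₀ w v := exp_pos _
  have hsplit : Efun a L N α₀ u v / (v ^ ν * L (u v)) - Efun a L N α₀ w v / (v ^ ν * L (w v)) =
      (v ^ ν)⁻¹ * ((Efun a L N α₀ u v - Efun a L N α₀ w v) * (L (u v))⁻¹ +
        Efun a L N α₀ w v * ((L (u v))⁻¹ - (L (w v))⁻¹)) := by
    field_simp
    ring
  have hinv : |(L (u v))⁻¹ - (L (w v))⁻¹| ≤ Ltil * M / Lm ^ 2 :=
    (abs_inv_sub_inv_le h.pos (h.le_L _) (h.le_L _)).trans <| by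
      gcongr
      exact (h.lipschitz_L _ _).trans
        (mul_le_mul_of_nonneg_left (hM v ⟨hv, le_rfl⟩) h.Ltil_nonneg)
  rw [hsplit, abs_mul, abs_inv, abs_of_pos hvν, ← rpow_neg hv0.le]
  calc v ^ (-ν) * |(Efun a L N α₀ u v - Efun a L N α₀ w v) * (L (u v))⁻¹ +
        Efun a L N α₀ w v * ((L (u v))⁻¹ - (L (w v))⁻¹)|
      ≤ v ^ (-ν) * (|Efun a L N α₀ u v - Efun a L N α₀ w v| * (L (u v))⁻¹ +
          Efun a L N α₀ w v * |(L (u v))⁻¹ - (L (w v))⁻¹|) := by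
        gcongr
        refine (abs_add_le _ _).trans_eq ?_
        rw [abs_mul, abs_mul, abs_of_pos (inv_pos.2 hLu), abs_of_pos hEw]
    _ ≤ v ^ (-ν) * (ratioLip Lm NM Ltil Ntil * M * (v ^ 2 - α₀ ^ 2) / a * Lm⁻¹ +
          1 * (Ltil * M / Lm ^ 2)) := by
        have hE := h.abs_Efun_sub_le ha hα₀.le hv hu hw hM
        have hE1 := h.Efun_le_one (u := w) ha hα₀.le hv
        have hLm := h.pos
        gcongr
        · exact (abs_nonneg _).trans hE
        · exact h.le_L _
    _ = _ := by field_simp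

lemma continuousOn_Phi_integrand (h : CoeffBounds L N Lm NM Ltil Ntil) (hα₀ : 0 < α₀)
    (hη : α₀ ≤ η) (hu : ContinuousOn u (Icc α₀ η)) :
    ContinuousOn (fun v => Efun a L N α₀ u v / (v ^ ν * L (u v))) (Icc α₀ η) := by
  have hI : ContinuousOn (fun v => ∫ s in α₀..v, s * N (u s) / L (u s)) (Icc α₀ η) := by
    rw [← uIcc_of_le hη]
    refine intervalIntegral.continuousOn_primitive_interval ?_
    rw [uIcc_of_le hη]
    exact (h.continuousOn_exponent_integrand hu).integrableOn_Icc
  refine (continuous_exp.comp_continuousOn (continuousOn_const.mul hI)).div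
    ((continuousOn_id.rpow_const fun v hv => Or.inl (hα₀.trans_le hv.1).ne').mul
      (h.continuous_L.comp_continuousOn hu)) fun v hv => ?_
  exact (mul_pos (rpow_pos_of_pos (hα₀.trans_le hv.1) ν) (h.L_pos _)).ne'

lemma abs_Phi_sub_le (h : CoeffBounds L N Lm NM Ltil Ntil) (ha : 0 < a) (hα₀ : 0 < α₀)
    (hη : α₀ ≤ η) (hu : ContinuousOn u (Icc α₀ η)) (hw : ContinuousOn w (Icc α₀ η))
    (hM : ∀ s ∈ Icc α₀ η, |u s - w s| ≤ M) :
    |Phi a ν L N α₀ u η - Phi a ν L N α₀ w η| ≤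
      α₀ ^ ν * (ratioLip Lm NM Ltil Ntil * M / (a * Lm) *
          (∫ v in α₀..η, v ^ (-ν) * (v ^ 2 - α₀ ^ 2)) +
        Ltil * M / Lm ^ 2 * ∫ v in α₀..η, v ^ (-ν)) := by
  have hint : ∀ {f : ℝ → ℝ}, ContinuousOn f (Icc α₀ η) →
      IntervalIntegrable (fun v => Efun a L N α₀ f v / (v ^ ν * L (f v))) volume α₀ η :=
    fun hf => (h.continuousOn_Phi_integrand hα₀ hη hf).intervalIntegrable_of_Icc hη
  have h0 : (0 : ℝ) ∉ uIcc α₀ η := fun h0 => by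
    rw [uIcc_of_le hη] at h0
    exact (hα₀.trans_le h0.1).false
  have hrpow : IntervalIntegrable (fun v => v ^ (-ν)) volume α₀ η :=
    intervalIntegral.intervalIntegrable_rpow (Or.inr h0)
  have hrpow_sq : IntervalIntegrable (fun v => v ^ (-ν) * (v ^ 2 - α₀ ^ 2)) volume α₀ η :=
    hrpow.mul_continuousOn (by fun_prop)
  rw [← intervalIntegral.integral_const_mul, ← intervalIntegral.integral_const_mul,
    ← intervalIntegral.integral_add (hrpow_sq.const_mul _) (hrpow.const_mul _), Phi, Phi,
    ← mul_sub, ← intervalIntegral.integral_sub (hint hu) (hint hw), abs_mul,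
    abs_of_pos (rpow_pos_of_pos hα₀ ν)]
  gcongr
  refine abs_integral_le_of_abs_le hη (fun v hv => ?_)
    ((hrpow_sq.const_mul _).add (hrpow.const_mul _))
  have hsub : Icc α₀ v ⊆ Icc α₀ η := Icc_subset_Icc_right hv.2
  exact h.abs_Phi_integrand_sub_le ha hα₀ hv.1 (hu.mono hsub) (hw.mono hsub)
    fun s hs => hM s (hsub hs)

end CoeffBounds

theorem stmt_3_general (a ν α₀ ξ : ℝ) (L N : ℝ → ℝ) (Lm LM Nm NM Ltil Ntil : ℝ)
    (ha : 0 < a) (hν1 : ν < 1) (hα₀ : 0 < α₀)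
    (hLcont : Continuous L) (hNcont : Continuous N)
    (hLm : 0 < Lm) (hNm : 0 < Nm)
    (hL : ∀ x : ℝ, Lm ≤ L x ∧ L x ≤ LM)
    (hN : ∀ x : ℝ, Nm ≤ N x ∧ N x ≤ NM)
    (hLlip : ∀ x y : ℝ, |L x - L y| ≤ Ltil * |x - y|)
    (hNlip : ∀ x y : ℝ, |N x - N y| ≤ Ntil * |x - y|) :
    ∀ u ustar : ℝ → ℝ, ContinuousOn u (Icc α₀ ξ) → ContinuousOn ustar (Icc α₀ ξ) →
      ∀ η ∈ Icc α₀ ξ,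
        |Phi a ν L N α₀ u η - Phi a ν L N α₀ ustar η| ≤
          PhiTilde a ν Lm NM Ltil Ntil α₀ η * supNorm α₀ ξ (fun x => u x - ustar x) := by
  intro u ustar hu hus η ⟨hαη, hηξ⟩
  have hc : CoeffBounds L N Lm NM Ltil Ntil := ⟨hLcont, hNcont, hLm, fun x => (hL x).1,
    fun x => hNm.le.trans (hN x).1, fun x => (hN x).2, hLlip, hNlip⟩
  have hIcc : Icc α₀ η ⊆ Icc α₀ ξ := Icc_subset_Icc_right hηξ
  have hM : ∀ s ∈ Icc α₀ η, |u s - ustar s| ≤ supNorm α₀ ξ (fun x => u x - ustar x) :=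
    fun s hs => abs_le_supNorm (f := fun x => u x - ustar x) (hu.sub hus) (hIcc hs)
  refine (hc.abs_Phi_sub_le ha hα₀ hαη (hu.mono hIcc) (hus.mono hIcc) hM).trans_eq ?_
  rw [integral_rpow_neg_mul_sq_sub_sq hα₀ (hα₀.trans_le hαη) hν1.ne (by linarith),
    integral_rpow (Or.inl (by linarith)), show -ν + 1 = 1 - ν by ring, PhiTilde, ratioLip]
  have : 1 - ν ≠ 0 := by linarith
  field_simp

theorem stmt_3 (a ν α₀ ξ : ℝ) (L N : ℝ → ℝ) (Lm LM Nm NM Ltil Ntil : ℝ)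
    (ha : 0 < a) (hν0 : 0 < ν) (hν1 : ν < 1) (hα₀ : 0 < α₀) (hαξ : α₀ < ξ)
    (hLcont : Continuous L) (hNcont : Continuous N)
    (hLm : 0 < Lm) (hNm : 0 < Nm) (hLtil : 0 < Ltil) (hNtil : 0 < Ntil)
    (hL : ∀ x : ℝ, Lm ≤ L x ∧ L x ≤ LM)
    (hN : ∀ x : ℝ, Nm ≤ N x ∧ N x ≤ NM)
    (hLlip : ∀ x y : ℝ, |L x - L y| ≤ Ltil * |x - y|)
    (hNlip : ∀ x y : ℝ, |N x - N y| ≤ Ntil * |x - y|) :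
    ∀ u ustar : ℝ → ℝ, ContinuousOn u (Icc α₀ ξ) → ContinuousOn ustar (Icc α₀ ξ) →
      ∀ η ∈ Icc α₀ ξ,
        |Phi a ν L N α₀ u η - Phi a ν L N α₀ ustar η| ≤
          PhiTilde a ν Lm NM Ltil Ntil α₀ η * supNorm α₀ ξ (fun x => u x - ustar x) :=
  stmt_3_general a ν α₀ ξ L N Lm LM Nm NM Ltil Ntil ha hν1 hα₀ hLcont hNcont hLm hNm hL hN hLlip
    hNlip
end

section
/- Let q* > 0 and let u : [α₀, ξ] → ℝ be a continuous function satisfying the integral equation u(η) = q*·(Φ(ξ, u) − Φ(η, u)) for all η ∈ [α₀, ξ]. Then u is continuously differentiable on (α₀, ξ), and for all η ∈ (α₀, ξ): (i) L*(u(η))·η^ν·u'(η) = −q*·α₀^ν·E(η, u); (ii) the function η ↦ L*(u(η))·η^ν·u'(η) is differentiable with (L*(u(η))·η^ν·u'(η))' + (2/a)·η^{ν+1}·N*(u(η))·u'(η) = 0; (iii) u(ξ) = 0 and the one-sided derivative at α₀ satisfies L*(u(α₀))·u'(α₀) = −q*·E(α₀,u)·α₀^ν/α₀^ν = −q*. 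-/
/-!
Differentiating the integral equation gives `u' = -q α₀^ν E / (η^ν L*(u))`, i.e. the flux
`L*(u) η^ν u'` equals `-q α₀^ν E`. Since `E' = -(2/a) (η N*(u) / L*(u)) E`, differentiating the
flux once more produces `-(2/a) η^{ν+1} N*(u) u'`. At `α₀` we have `E = 1`, and at `ξ` the two
`Φ`-terms cancel.
-/

open Real MeasureTheory Set

theorem hasDerivWithinAt_integral_Icc {E : Type*} [NormedAddCommGroup E] [NormedSpace ℝ E]
    [CompleteSpace E] {f : ℝ → E} {a b t : ℝ} (hf : ContinuousOn f (Icc a b))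
    (ht : t ∈ Icc a b) :
    HasDerivWithinAt (fun x => ∫ s in a..x, f s) (f t) (Icc a b) t := by
  have : Fact (t ∈ Icc a b) := ⟨ht⟩
  have hint : IntervalIntegrable f volume a t :=
    (hf.mono (by rw [uIcc_of_le ht.1]; exact Icc_subset_Icc_right ht.2)).intervalIntegrable
  exact intervalIntegral.integral_hasDerivWithinAt_right hint
    (hf.stronglyMeasurableAtFilter_nhdsWithin measurableSet_Icc t) (hf t ht)

/-- The derivative of a solution of the integral equation `u = q (Φ(ξ) - Φ)`. -/
noncomputable def solutionDeriv (a ν q : ℝ) (L N : ℝ → ℝ) (α₀ : ℝ) (u : ℝ → ℝ) (t : ℝ) : ℝ :=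
  -q * α₀ ^ ν * Efun a L N α₀ u t / (t ^ ν * L (u t))

section

variable {a ν q α₀ ξ t : ℝ} {L N u : ℝ → ℝ}

theorem Efun_self : Efun a L N α₀ u α₀ = 1 := by
  simp [Efun]

theorem hasDerivWithinAt_Efun (hL : Continuous L) (hN : Continuous N) (hL0 : ∀ x, L x ≠ 0)
    (hu : ContinuousOn u (Icc α₀ ξ)) (ht : t ∈ Icc α₀ ξ) :
    HasDerivWithinAt (Efun a L N α₀ u)
      (Efun a L N α₀ u t * (-(2 / a) * (t * N (u t) / L (u t)))) (Icc α₀ ξ) t := by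
  have hg : ContinuousOn (fun s => s * N (u s) / L (u s)) (Icc α₀ ξ) :=
    (continuousOn_id.mul (hN.comp_continuousOn hu)).div (hL.comp_continuousOn hu)
      fun _ _ => hL0 _
  exact ((hasDerivWithinAt_integral_Icc hg ht).const_mul (-(2 / a))).exp

theorem continuousOn_Efun_s7 (hL : Continuous L) (hN : Continuous N) (hL0 : ∀ x, L x ≠ 0)
    (hu : ContinuousOn u (Icc α₀ ξ)) : ContinuousOn (Efun a L N α₀ u) (Icc α₀ ξ) :=
  fun _ ht => (hasDerivWithinAt_Efun hL hN hL0 hu ht).continuousWithinAt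

theorem continuousOn_Phi_integrand (hα₀ : 0 < α₀) (hL : Continuous L) (hN : Continuous N)
    (hL0 : ∀ x, L x ≠ 0) (hu : ContinuousOn u (Icc α₀ ξ)) :
    ContinuousOn (fun v => Efun a L N α₀ u v / (v ^ ν * L (u v))) (Icc α₀ ξ) := by
  exact (continuousOn_Efun_s7 hL hN hL0 hu).div
    ((continuousOn_id.rpow_const fun v hv => Or.inl (hα₀.trans_le hv.1).ne').mul
      (hL.comp_continuousOn hu))
    fun v hv => mul_ne_zero (rpow_pos_of_pos (hα₀.trans_le hv.1) ν).ne' (hL0 _)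

theorem continuousOn_solutionDeriv (hα₀ : 0 < α₀) (hL : Continuous L) (hN : Continuous N)
    (hL0 : ∀ x, L x ≠ 0) (hu : ContinuousOn u (Icc α₀ ξ)) :
    ContinuousOn (solutionDeriv a ν q L N α₀ u) (Icc α₀ ξ) := by
  show ContinuousOn (fun t => -q * α₀ ^ ν * Efun a L N α₀ u t / (t ^ ν * L (u t))) _
  simp_rw [mul_div_assoc]
  exact continuousOn_const.mul (continuousOn_Phi_integrand hα₀ hL hN hL0 hu)

theorem hasDerivWithinAt_Phi (hα₀ : 0 < α₀) (hL : Continuous L) (hN : Continuous N)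
    (hL0 : ∀ x, L x ≠ 0) (hu : ContinuousOn u (Icc α₀ ξ)) (ht : t ∈ Icc α₀ ξ) :
    HasDerivWithinAt (Phi a ν L N α₀ u)
      (α₀ ^ ν * (Efun a L N α₀ u t / (t ^ ν * L (u t)))) (Icc α₀ ξ) t :=
  (hasDerivWithinAt_integral_Icc (continuousOn_Phi_integrand hα₀ hL hN hL0 hu) ht).const_mul _

theorem hasDerivWithinAt_solutionDeriv (hα₀ : 0 < α₀) (hL : Continuous L) (hN : Continuous N)
    (hL0 : ∀ x, L x ≠ 0) (hu : ContinuousOn u (Icc α₀ ξ))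
    (heq : ∀ η ∈ Icc α₀ ξ, u η = q * (Phi a ν L N α₀ u ξ - Phi a ν L N α₀ u η))
    (ht : t ∈ Icc α₀ ξ) :
    HasDerivWithinAt u (solutionDeriv a ν q L N α₀ u t) (Icc α₀ ξ) t := by
  have h := ((hasDerivWithinAt_Phi (a := a) (ν := ν) hα₀ hL hN hL0 hu ht).const_sub
    (Phi a ν L N α₀ u ξ)).const_mul q
  rw [show q * -(α₀ ^ ν * (Efun a L N α₀ u t / (t ^ ν * L (u t))))
      = solutionDeriv a ν q L N α₀ u t by simp only [solutionDeriv]; ring] at h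
  exact h.congr heq (heq t ht)

theorem flux_eq_solutionDeriv (hL0 : ∀ x, L x ≠ 0) (ht : 0 < t) :
    L (u t) * t ^ ν * solutionDeriv a ν q L N α₀ u t = -q * α₀ ^ ν * Efun a L N α₀ u t := by
  have := (rpow_pos_of_pos ht ν).ne'
  have := hL0 (u t)
  simp only [solutionDeriv]
  field_simp

theorem solutionDeriv_left (hL0 : ∀ x, L x ≠ 0) (hα₀ : 0 < α₀) :
    L (u α₀) * solutionDeriv a ν q L N α₀ u α₀ = -q := by
  have := (rpow_pos_of_pos hα₀ ν).ne'
  have := hL0 (u α₀)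
  rw [solutionDeriv, Efun_self]
  field_simp

theorem hasDerivAt_flux (hα₀ : 0 < α₀) (hL : Continuous L) (hN : Continuous N)
    (hL0 : ∀ x, L x ≠ 0) (hu : ContinuousOn u (Icc α₀ ξ)) {η : ℝ} (hη : η ∈ Ioo α₀ ξ) :
    HasDerivAt (fun t => L (u t) * t ^ ν * solutionDeriv a ν q L N α₀ u t)
      (-(2 / a) * η ^ (ν + 1) * N (u η) * solutionDeriv a ν q L N α₀ u η) η := by
  have hη0 : 0 < η := hα₀.trans hη.1
  have hE := ((hasDerivWithinAt_Efun (a := a) hL hN hL0 hu (Ioo_subset_Icc_self hη)).hasDerivAt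
    (Icc_mem_nhds hη.1 hη.2)).const_mul (-q * α₀ ^ ν)
  have hflux : (fun t => L (u t) * t ^ ν * solutionDeriv a ν q L N α₀ u t)
      =ᶠ[nhds η] fun t => -q * α₀ ^ ν * Efun a L N α₀ u t :=
    Filter.eventually_of_mem (Ioi_mem_nhds hη0) fun t ht => flux_eq_solutionDeriv hL0 ht
  refine (hE.congr_of_eventuallyEq hflux).congr_deriv ?_
  have := (rpow_pos_of_pos hη0 ν).ne'
  have := hL0 (u η)
  rw [rpow_add_one hη0.ne', solutionDeriv]
  field_simp

end

theorem stmt_7_general (a ν α₀ ξ : ℝ) (L N : ℝ → ℝ) (Lm LM q : ℝ)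
    (hα₀ : 0 < α₀) (hαξ : α₀ < ξ)
    (hLcont : Continuous L) (hNcont : Continuous N)
    (hLm : 0 < Lm)
    (hL : ∀ x : ℝ, Lm ≤ L x ∧ L x ≤ LM)
    (u : ℝ → ℝ) (hu : ContinuousOn u (Icc α₀ ξ))
    (heq : ∀ η ∈ Icc α₀ ξ, u η = q * (Phi a ν L N α₀ u ξ - Phi a ν L N α₀ u η)) :
    ∃ u' : ℝ → ℝ,
      ContinuousOn u' (Ioo α₀ ξ) ∧
      (∀ η ∈ Ioo α₀ ξ, HasDerivAt u (u' η) η) ∧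
      -- (i) `L*(u(η))·η^ν·u'(η) = −q*·α₀^ν·E(η,u)`
      (∀ η ∈ Ioo α₀ ξ,
        L (u η) * η ^ ν * u' η = -q * α₀ ^ ν * Efun a L N α₀ u η) ∧
      -- (ii) `(L*(u(η))·η^ν·u'(η))' + (2/a)·η^{ν+1}·N*(u(η))·u'(η) = 0`
      (∀ η ∈ Ioo α₀ ξ,
        HasDerivAt (fun t => L (u t) * t ^ ν * u' t)
          (-(2 / a) * η ^ (ν + 1) * N (u η) * u' η) η) ∧
      -- (iii) `u(ξ) = 0` and the one-sided derivative at `α₀` satisfies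
      -- `L*(u(α₀))·u'(α₀) = −q*`
      u ξ = 0 ∧
      (∃ d : ℝ, HasDerivWithinAt u d (Ici α₀) α₀ ∧ L (u α₀) * d = -q) := by
  have hL0 : ∀ x, L x ≠ 0 := fun x => (hLm.trans_le (hL x).1).ne'
  have hderiv : ∀ t ∈ Icc α₀ ξ, HasDerivWithinAt u (solutionDeriv a ν q L N α₀ u t) (Icc α₀ ξ) t :=
    fun t ht => hasDerivWithinAt_solutionDeriv hα₀ hLcont hNcont hL0 hu heq ht
  refine ⟨solutionDeriv a ν q L N α₀ u,
    (continuousOn_solutionDeriv hα₀ hLcont hNcont hL0 hu).mono Ioo_subset_Icc_self,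
    fun η hη => (hderiv η (Ioo_subset_Icc_self hη)).hasDerivAt (Icc_mem_nhds hη.1 hη.2),
    fun η hη => flux_eq_solutionDeriv hL0 (hα₀.trans hη.1),
    fun η hη => hasDerivAt_flux hα₀ hLcont hNcont hL0 hu hη,
    by rw [heq ξ (right_mem_Icc.2 hαξ.le), sub_self, mul_zero],
    _, (hderiv α₀ (left_mem_Icc.2 hαξ.le)).mono_of_mem_nhdsWithin (Icc_mem_nhdsGE hαξ),
    solutionDeriv_left hL0 hα₀⟩

theorem stmt_7 (a ν α₀ ξ : ℝ) (L N : ℝ → ℝ) (Lm LM Nm NM q : ℝ)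
    (ha : 0 < a) (hν0 : 0 < ν) (hν1 : ν < 1) (hα₀ : 0 < α₀) (hαξ : α₀ < ξ)
    (hq : 0 < q)
    (hLcont : Continuous L) (hNcont : Continuous N)
    (hLm : 0 < Lm) (hNm : 0 < Nm)
    (hL : ∀ x : ℝ, Lm ≤ L x ∧ L x ≤ LM)
    (hN : ∀ x : ℝ, Nm ≤ N x ∧ N x ≤ NM)
    (u : ℝ → ℝ) (hu : ContinuousOn u (Icc α₀ ξ))
    (heq : ∀ η ∈ Icc α₀ ξ, u η = q * (Phi a ν L N α₀ u ξ - Phi a ν L N α₀ u η)) :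
    ∃ u' : ℝ → ℝ,
      ContinuousOn u' (Ioo α₀ ξ) ∧
      (∀ η ∈ Ioo α₀ ξ, HasDerivAt u (u' η) η) ∧
      -- (i) `L*(u(η))·η^ν·u'(η) = −q*·α₀^ν·E(η,u)`
      (∀ η ∈ Ioo α₀ ξ,
        L (u η) * η ^ ν * u' η = -q * α₀ ^ ν * Efun a L N α₀ u η) ∧
      -- (ii) `(L*(u(η))·η^ν·u'(η))' + (2/a)·η^{ν+1}·N*(u(η))·u'(η) = 0`
      (∀ η ∈ Ioo α₀ ξ,
        HasDerivAt (fun t => L (u t) * t ^ ν * u' t)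
          (-(2 / a) * η ^ (ν + 1) * N (u η) * u' η) η) ∧
      -- (iii) `u(ξ) = 0` and the one-sided derivative at `α₀` satisfies
      -- `L*(u(α₀))·u'(α₀) = −q*`
      u ξ = 0 ∧
      (∃ d : ℝ, HasDerivWithinAt u d (Ici α₀) α₀ ∧ L (u α₀) * d = -q) :=
  stmt_7_general a ν α₀ ξ L N Lm LM q hα₀ hαξ hLcont hNcont hLm hL u hu heq
end

section
/- Let p* > 0 and Ste > 0, and for a continuous function u : [α₀, ξ] → ℝ define φ^c(ξ, u) = a·α₀^ν·E(ξ, u)·Ste/(2·(1 + p*·Φ(ξ, u))). Then for every continuous u one has 0 < φ^c(ξ, u) ≤ (a·α₀^ν·Ste/2)·exp(−(N_m/(a·L_M))·(ξ² − α₀²)). -/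
open Real MeasureTheory Set

/-!
Since `Φ ≥ 0`, the denominator `2 (1 + p* Φ)` is at least `2`, so `φ^c ≤ a α₀^ν Ste E(ξ,u) / 2`.
On `[α₀, ξ]` the integrand of `E` is at least `s N_m / L_M`, whose integral is
`N_m (ξ² − α₀²) / (2 L_M)`; this bounds `E(ξ,u)` by the exponential on the right.
-/

theorem Phi_nonneg {a ν α₀ η : ℝ} {L N u : ℝ → ℝ} (hα₀ : 0 < α₀) (hαη : α₀ ≤ η)
    (hL : ∀ x, 0 < L x) : 0 ≤ Phi a ν L N α₀ u η := by
  refine mul_nonneg (rpow_pos_of_pos hα₀ ν).le (intervalIntegral.integral_nonneg hαη ?_)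
  intro v hv
  have hv0 : 0 < v := hα₀.trans_le hv.1
  exact div_nonneg (exp_pos _).le (mul_pos (rpow_pos_of_pos hv0 ν) (hL _)).le

theorem mul_sq_sub_sq_div_two_le_integral {g : ℝ → ℝ} {c α β : ℝ} (hα : 0 ≤ α) (hαβ : α ≤ β)
    (hg : IntervalIntegrable (fun s => s * g s) volume α β) (hc : ∀ s ∈ Icc α β, c ≤ g s) :
    c * ((β ^ 2 - α ^ 2) / 2) ≤ ∫ s in α..β, s * g s := by
  have hid : ∫ s in α..β, s * c = c * ((β ^ 2 - α ^ 2) / 2) := by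
    rw [intervalIntegral.integral_mul_const, integral_id]
    ring
  rw [← hid]
  refine intervalIntegral.integral_mono_on hαβ
    ((continuous_id.mul continuous_const).intervalIntegrable _ _) hg fun s hs => ?_
  exact mul_le_mul_of_nonneg_left (hc s hs) (hα.trans hs.1)

theorem Efun_le_exp {a α₀ ξ LM Nm : ℝ} {L N u : ℝ → ℝ} (ha : 0 < a) (hα₀ : 0 < α₀)
    (hαξ : α₀ ≤ ξ) (hLcont : Continuous L) (hNcont : Continuous N) (hLpos : ∀ x, 0 < L x)
    (hLM : ∀ x, L x ≤ LM) (hNm : 0 ≤ Nm) (hN : ∀ x, Nm ≤ N x)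
    (hu : ContinuousOn u (Icc α₀ ξ)) :
    Efun a L N α₀ u ξ ≤ exp (-(Nm / (a * LM)) * (ξ ^ 2 - α₀ ^ 2)) := by
  have hratio : ∀ x, Nm / LM ≤ N x / L x := fun x =>
    div_le_div₀ (hNm.trans (hN x)) (hN x) (hLpos x) (hLM x)
  have hint : IntervalIntegrable (fun s => s * (N (u s) / L (u s))) volume α₀ ξ := by
    refine ContinuousOn.intervalIntegrable ?_
    rw [uIcc_of_le hαξ]
    exact continuousOn_id.mul ((hNcont.comp_continuousOn hu).div
      (hLcont.comp_continuousOn hu) fun s _ => (hLpos _).ne')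
  have hlower := mul_sq_sub_sq_div_two_le_integral hα₀.le hαξ hint fun s _ => hratio (u s)
  conv at hlower => rhs; simp only [← mul_div_assoc]
  have hLM_pos : 0 < LM := (hLpos 0).trans_le (hLM 0)
  rw [Efun, exp_le_exp]
  calc -(2 / a) * ∫ s in α₀..ξ, s * N (u s) / L (u s)
        = -((2 / a) * ∫ s in α₀..ξ, s * N (u s) / L (u s)) := neg_mul _ _
    _ ≤ -((2 / a) * (Nm / LM * ((ξ ^ 2 - α₀ ^ 2) / 2))) := by gcongr
    _ = -(Nm / (a * LM)) * (ξ ^ 2 - α₀ ^ 2) := by field_simp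

theorem stmt_12_general (a ν α₀ ξ : ℝ) (L N : ℝ → ℝ) (Lm LM Nm NM p Ste : ℝ)
    (ha : 0 < a) (hα₀ : 0 < α₀) (hαξ : α₀ < ξ)
    (hp : 0 < p) (hSte : 0 < Ste)
    (hLcont : Continuous L) (hNcont : Continuous N)
    (hLm : 0 < Lm) (hNm : 0 < Nm)
    (hL : ∀ x : ℝ, Lm ≤ L x ∧ L x ≤ LM)
    (hN : ∀ x : ℝ, Nm ≤ N x ∧ N x ≤ NM) :
    ∀ u : ℝ → ℝ, ContinuousOn u (Icc α₀ ξ) →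
      0 < a * α₀ ^ ν * Efun a L N α₀ u ξ * Ste /
            (2 * (1 + p * Phi a ν L N α₀ u ξ)) ∧
        a * α₀ ^ ν * Efun a L N α₀ u ξ * Ste /
            (2 * (1 + p * Phi a ν L N α₀ u ξ)) ≤
          (a * α₀ ^ ν * Ste / 2) *
            Real.exp (-(Nm / (a * LM)) * (ξ ^ 2 - α₀ ^ 2)) := by
  intro u hu
  have hLpos : ∀ x, 0 < L x := fun x => hLm.trans_le (hL x).1
  have hΦ : 0 ≤ Phi a ν L N α₀ u ξ := Phi_nonneg hα₀ hαξ.le hLpos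
  have hE : Efun a L N α₀ u ξ ≤ exp (-(Nm / (a * LM)) * (ξ ^ 2 - α₀ ^ 2)) :=
    Efun_le_exp ha hα₀ hαξ.le hLcont hNcont hLpos (fun x => (hL x).2) hNm.le
      (fun x => (hN x).1) hu
  have hnum : 0 < a * α₀ ^ ν * Efun a L N α₀ u ξ * Ste := by
    have := exp_pos (-(2 / a) * ∫ s in α₀..ξ, s * N (u s) / L (u s))
    have := rpow_pos_of_pos hα₀ ν
    rw [Efun]
    positivity
  have hden : 2 ≤ 2 * (1 + p * Phi a ν L N α₀ u ξ) := by nlinarith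
  refine ⟨div_pos hnum (by linarith), ?_⟩
  calc a * α₀ ^ ν * Efun a L N α₀ u ξ * Ste / (2 * (1 + p * Phi a ν L N α₀ u ξ))
      ≤ a * α₀ ^ ν * Efun a L N α₀ u ξ * Ste / 2 :=
        div_le_div_of_nonneg_left hnum.le two_pos hden
    _ = (a * α₀ ^ ν * Ste / 2) * Efun a L N α₀ u ξ := by ring
    _ ≤ (a * α₀ ^ ν * Ste / 2) * exp (-(Nm / (a * LM)) * (ξ ^ 2 - α₀ ^ 2)) := by
        have := rpow_pos_of_pos hα₀ ν
        gcongr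

theorem stmt_12 (a ν α₀ ξ : ℝ) (L N : ℝ → ℝ) (Lm LM Nm NM p Ste : ℝ)
    (ha : 0 < a) (hν0 : 0 < ν) (hν1 : ν < 1) (hα₀ : 0 < α₀) (hαξ : α₀ < ξ)
    (hp : 0 < p) (hSte : 0 < Ste)
    (hLcont : Continuous L) (hNcont : Continuous N)
    (hLm : 0 < Lm) (hNm : 0 < Nm)
    (hL : ∀ x : ℝ, Lm ≤ L x ∧ L x ≤ LM)
    (hN : ∀ x : ℝ, Nm ≤ N x ∧ N x ≤ NM) :
    ∀ u : ℝ → ℝ, ContinuousOn u (Icc α₀ ξ) →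
      0 < a * α₀ ^ ν * Efun a L N α₀ u ξ * Ste /
            (2 * (1 + p * Phi a ν L N α₀ u ξ)) ∧
        a * α₀ ^ ν * Efun a L N α₀ u ξ * Ste /
            (2 * (1 + p * Phi a ν L N α₀ u ξ)) ≤
          (a * α₀ ^ ν * Ste / 2) *
            Real.exp (-(Nm / (a * LM)) * (ξ ^ 2 - α₀ ^ 2)) :=
  stmt_12_general a ν α₀ ξ L N Lm LM Nm NM p Ste ha hα₀ hαξ hp hSte hLcont hNcont hLm hNm hL hN
end

section
/- Let a > 0, q* > 0, 0 < ν < 1, 0 < α₀ < ξ, and define u : [α₀, ξ] → ℝ by u(η) = (q*·α₀^ν/2)·exp(α₀²/a)·a^{(1−ν)/2}·[γ((1−ν)/2, ξ²/a) − γ((1−ν)/2, η²/a)], where γ(s,x) = ∫₀ˣ t^{s−1} e^{−t} dt is the lower incomplete gamma function. Then: (i) u(ξ) = 0; (ii) u is differentiable on [α₀, ξ] with u'(η) = −q*·α₀^ν·η^{−ν}·exp(−(η² − α₀²)/a), so in particular u'(α₀) = −q*; (iii) u satisfies the ordinary differential equation (η^ν·u'(η))' + (2/a)·η^{ν+1}·u'(η)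 = 0 for all η ∈ (α₀, ξ). -/
open Real MeasureTheory Set

/-!
With `s = (1 - ν) / 2`, the fundamental theorem of calculus and the chain rule give
`d/dη γ(s, η²/a) = 2 a^{-s} η^{2s-1} e^{-η²/a}` with `2s - 1 = -ν`, and the factor `a^s / 2`
in `u` cancels `2 a^{-s}`. Hence `η^ν u'(η) = -q α₀^ν e^{-(η² - α₀²)/a}`, a Gaussian whose
derivative is `-(2η/a)` times itself, which is the ODE.
-/

lemma lowerGamma_hasDerivAt {s x : ℝ} (hs : 0 < s) (hx : 0 < x) :
    HasDerivAt (lowerGamma s) (x ^ (s - 1) * Real.exp (-x)) x := by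
  have hcont : ContinuousOn (fun t : ℝ => t ^ (s - 1) * Real.exp (-t)) (Ioi 0) :=
    (continuousOn_id.rpow_const fun t ht => Or.inl (ne_of_gt ht)).mul (by fun_prop)
  refine intervalIntegral.integral_hasDerivAt_right ?_ ?_ ?_
  · exact (intervalIntegral.intervalIntegrable_rpow' (by linarith)).mul_continuousOn
      (by fun_prop)
  · exact ⟨Ioi 0, Ioi_mem_nhds hx, hcont.aestronglyMeasurable measurableSet_Ioi⟩
  · exact hcont.continuousAt (Ioi_mem_nhds hx)

lemma rpow_mul_rpow_neg_of_pos {x : ℝ} (hx : 0 < x) (y : ℝ) : x ^ y * x ^ (-y) = 1 := by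
  rw [← Real.rpow_add hx, add_neg_cancel, Real.rpow_zero]

lemma hasDerivAt_lowerGamma_sq_div {s a η : ℝ} (hs : 0 < s) (ha : 0 < a) (hη : 0 < η) :
    HasDerivAt (fun t => lowerGamma s (t ^ 2 / a))
      (2 * a ^ (-s) * η ^ (2 * s - 1) * Real.exp (-(η ^ 2 / a))) η := by
  have hsq : HasDerivAt (fun t : ℝ => t ^ 2 / a) (2 * η / a) η := by
    simpa [mul_comm] using (hasDerivAt_pow 2 η).div_const a
  refine ((lowerGamma_hasDerivAt hs (by positivity)).comp η hsq).congr_deriv ?_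
  have hpow : (η ^ 2 / a) ^ (s - 1) = η ^ (2 * s - 1) / η * a / a ^ s := by
    rw [Real.div_rpow (by positivity) ha.le, ← Real.rpow_natCast, ← Real.rpow_mul hη.le,
      Real.rpow_sub_one ha.ne', ← Real.rpow_sub_one hη.ne']
    field_simp
    ring_nf
  rw [hpow, Real.rpow_neg ha.le]
  field_simp

lemma hasDerivAt_similarity_profile {a q ν α₀ ξ η : ℝ} (ha : 0 < a) (hν : ν < 1)
    (hη : 0 < η) :
    HasDerivAt (fun t => (q * α₀ ^ ν / 2) * Real.exp (α₀ ^ 2 / a) * a ^ ((1 - ν) / 2) *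
        (lowerGamma ((1 - ν) / 2) (ξ ^ 2 / a) - lowerGamma ((1 - ν) / 2) (t ^ 2 / a)))
      (-q * α₀ ^ ν * η ^ (-ν) * Real.exp (-(η ^ 2 - α₀ ^ 2) / a)) η := by
  refine (((hasDerivAt_lowerGamma_sq_div (by linarith) ha hη).const_sub _).const_mul _
    ).congr_deriv ?_
  have hexp : Real.exp (-(η ^ 2 - α₀ ^ 2) / a) =
      Real.exp (α₀ ^ 2 / a) * Real.exp (-(η ^ 2 / a)) := by
    rw [← Real.exp_add]; ring_nf
  rw [hexp, show 2 * ((1 - ν) / 2) - 1 = -ν by ring]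
  linear_combination (-q * α₀ ^ ν * η ^ (-ν) * Real.exp (α₀ ^ 2 / a) * Real.exp (-(η ^ 2 / a))) *
    rpow_mul_rpow_neg_of_pos ha ((1 - ν) / 2)

lemma hasDerivAt_similarity_flux {a q ν α₀ η : ℝ} (hη : 0 < η) :
    HasDerivAt
      (fun t : ℝ => t ^ ν * (-q * α₀ ^ ν * t ^ (-ν) * Real.exp (-(t ^ 2 - α₀ ^ 2) / a)))
      (-(2 / a) * η ^ (ν + 1) * (-q * α₀ ^ ν * η ^ (-ν) * Real.exp (-(η ^ 2 - α₀ ^ 2) / a)))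
      η := by
  have hflux : HasDerivAt (fun t : ℝ => -q * α₀ ^ ν * Real.exp (-(t ^ 2 - α₀ ^ 2) / a))
      (-q * α₀ ^ ν * (Real.exp (-(η ^ 2 - α₀ ^ 2) / a) * (-(2 * η) / a))) η := by
    have hexponent : HasDerivAt (fun t : ℝ => -(t ^ 2 - α₀ ^ 2) / a) (-(2 * η) / a) η := by
      simpa [mul_comm] using (((hasDerivAt_pow 2 η).sub_const (α₀ ^ 2)).neg).div_const a
    exact hexponent.exp.const_mul _
  refine (hflux.congr_of_eventuallyEq ?_).congr_deriv ?_
  · filter_upwards [Ioi_mem_nhds hη] with t ht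
    linear_combination (-q * α₀ ^ ν * Real.exp (-(t ^ 2 - α₀ ^ 2) / a)) *
      rpow_mul_rpow_neg_of_pos ht ν
  · rw [Real.rpow_add_one hη.ne']
    linear_combination (-(2 / a) * η * q * α₀ ^ ν * Real.exp (-(η ^ 2 - α₀ ^ 2) / a)) *
      rpow_mul_rpow_neg_of_pos hη ν

theorem stmt_14_general (a q ν α₀ ξ : ℝ)
    (ha : 0 < a) (hν1 : ν < 1)
    (hα₀ : 0 < α₀)
    (u : ℝ → ℝ)
    (hu : ∀ η : ℝ, u η =
      (q * α₀ ^ ν / 2) * Real.exp (α₀ ^ 2 / a) * a ^ ((1 - ν) / 2) *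
        (lowerGamma ((1 - ν) / 2) (ξ ^ 2 / a) -
          lowerGamma ((1 - ν) / 2) (η ^ 2 / a))) :
    -- (i)
    u ξ = 0 ∧
    -- (ii)
    (∀ η ∈ Icc α₀ ξ,
      HasDerivAt u
        (-q * α₀ ^ ν * η ^ (-ν) * Real.exp (-(η ^ 2 - α₀ ^ 2) / a)) η) ∧
    HasDerivAt u (-q) α₀ ∧
    -- (iii)
    (∀ η ∈ Ioo α₀ ξ,
      HasDerivAt
        (fun t : ℝ => t ^ ν *
          (-q * α₀ ^ ν * t ^ (-ν) * Real.exp (-(t ^ 2 - α₀ ^ 2) / a)))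
        (-(2 / a) * η ^ (ν + 1) *
          (-q * α₀ ^ ν * η ^ (-ν) * Real.exp (-(η ^ 2 - α₀ ^ 2) / a))) η) := by
  have hderiv : ∀ η, 0 < η →
      HasDerivAt u (-q * α₀ ^ ν * η ^ (-ν) * Real.exp (-(η ^ 2 - α₀ ^ 2) / a)) η := by
    rw [funext hu]
    exact fun η hη => hasDerivAt_similarity_profile ha hν1 hη
  refine ⟨by simp [hu], fun η hη => hderiv η (hα₀.trans_le hη.1), ?_,
    fun η hη => hasDerivAt_similarity_flux (hα₀.trans hη.1)⟩
  refine (hderiv α₀ hα₀).congr_deriv ?_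
  rw [mul_assoc (-q), rpow_mul_rpow_neg_of_pos hα₀, sub_self, neg_zero, zero_div, Real.exp_zero]
  ring

theorem stmt_14 (a q ν α₀ ξ : ℝ)
    (ha : 0 < a) (hq : 0 < q) (hν0 : 0 < ν) (hν1 : ν < 1)
    (hα₀ : 0 < α₀) (hαξ : α₀ < ξ)
    (u : ℝ → ℝ)
    (hu : ∀ η : ℝ, u η =
      (q * α₀ ^ ν / 2) * Real.exp (α₀ ^ 2 / a) * a ^ ((1 - ν) / 2) *
        (lowerGamma ((1 - ν) / 2) (ξ ^ 2 / a) -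
          lowerGamma ((1 - ν) / 2) (η ^ 2 / a))) :
    -- (i)
    u ξ = 0 ∧
    -- (ii)
    (∀ η ∈ Icc α₀ ξ,
      HasDerivAt u
        (-q * α₀ ^ ν * η ^ (-ν) * Real.exp (-(η ^ 2 - α₀ ^ 2) / a)) η) ∧
    HasDerivAt u (-q) α₀ ∧
    -- (iii)
    (∀ η ∈ Ioo α₀ ξ,
      HasDerivAt
        (fun t : ℝ => t ^ ν *
          (-q * α₀ ^ ν * t ^ (-ν) * Real.exp (-(t ^ 2 - α₀ ^ 2) / a)))
        (-(2 / a) * η ^ (ν + 1) *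
          (-q * α₀ ^ ν * η ^ (-ν) * Real.exp (-(η ^ 2 - α₀ ^ 2) / a))) η) :=
  stmt_14_general a q ν α₀ ξ ha hν1 hα₀ u hu
end
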